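/- Let 0 < p < 1, q = 1 - p, and let B be the infinite nonnegative matrix on S = {1, 2, 3, ...} with B(x, x+1) = p for all x ≥ 1, B(x, x-1) = q for all x ≥ 2, and all other entries 0. Then for every real λ ≥ 2·√(p·q) there exist strictly positive functions u : S → ℝ and η : S → ℝ such that p·u(x+1) + q·u(x-1) = λ·u(x) for all x ≥ 2, p·u(2) = λ·u(1), p·η(y-1) + q·η(y+1) = λ·η(y) for all y ≥ 2, and q·η(2) = λ·η(1); that is, B·u = λ·u and η·B = λ·η. In particular there is a continuum of positive eigenvalues of B admitting strictly positive column and row eigenvectors. -/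

import Mathlib

noncomputable def bdSeq (a b lam : ℝ) : ℕ → ℝ
  | 0 => 0
  | 1 => 1
  | (n+2) => (lam * bdSeq a b lam (n+1) - b * bdSeq a b lam n) / a

lemma bdSeq_rec (a b lam : ℝ) (ha : a ≠ 0) (x : ℕ) (hx : 1 ≤ x) :
    a * bdSeq a b lam (x + 1) + b * bdSeq a b lam (x - 1) = lam * bdSeq a b lam x := by
  obtain ⟨n, rfl⟩ : ∃ n, x = n + 1 := ⟨x - 1, by omega⟩
  show a * bdSeq a b lam (n + 2) + b * bdSeq a b lam n = lam * bdSeq a b lam (n+1)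
  rw [bdSeq]
  field_simp
  ring

lemma bdSeq_pos (a b lam : ℝ) (ha : 0 < a) (hb : 0 < b)
    (hlam : 2 * Real.sqrt (a * b) ≤ lam) :
    ∀ x, 1 ≤ x → 0 < bdSeq a b lam x := by
  have hab : 0 < a * b := mul_pos ha hb
  have hs0 : 0 < Real.sqrt (a * b) := Real.sqrt_pos.mpr hab
  have hlam0 : 0 < lam := lt_of_lt_of_le (by linarith) hlam
  set s := Real.sqrt (lam ^ 2 - 4 * a * b) with hs
  have hD : 0 ≤ lam ^ 2 - 4 * a * b := by
    have h2 : (2 * Real.sqrt (a * b)) ^ 2 = 4 * (a * b) := by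
      rw [mul_pow, Real.sq_sqrt hab.le]; ring
    nlinarith [sq_nonneg (lam - 2 * Real.sqrt (a*b))]
  have hsnn : 0 ≤ s := Real.sqrt_nonneg _
  have hs2 : s ^ 2 = lam ^ 2 - 4 * a * b := Real.sq_sqrt hD
  have hslam : s ≤ lam := by nlinarith
  set r := (lam + s) / (2 * a) with hr
  have hr0 : 0 < r := by positivity
  have hroot : a * r ^ 2 - lam * r + b = 0 := by
    rw [hr]; field_simp; nlinarith
  have key : ∀ n, 0 < bdSeq a b lam (n+1) ∧
      r * bdSeq a b lam (n+1) ≤ bdSeq a b lam (n+2) := by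
    intro n
    induction n with
    | zero =>
      have h1 : bdSeq a b lam 1 = 1 := rfl
      have h2 : bdSeq a b lam 2 = (lam * 1 - b * 0) / a := rfl
      constructor
      · rw [h1]; norm_num
      · rw [h1, h2, hr, mul_one]
        norm_num
        rw [div_le_div_iff₀ (by positivity) ha]
        nlinarith
    | succ n ih =>
      obtain ⟨hv1, hv2⟩ := ih
      have hv2pos : 0 < bdSeq a b lam (n+2) :=
        lt_of_lt_of_le (mul_pos hr0 hv1) hv2
      refine ⟨hv2pos, ?_⟩
      have h3 : bdSeq a b lam (n+3) =
          (lam * bdSeq a b lam (n+2) - b * bdSeq a b lam (n+1)) / a := rfl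
      have hmul : a * (r * bdSeq a b lam (n+2)) ≤
          lam * bdSeq a b lam (n+2) - b * bdSeq a b lam (n+1) := by
        nlinarith [mul_le_mul_of_nonneg_left hv2 hb.le]
      rw [h3, le_div_iff₀ ha]
      linarith [hmul]
  intro x hx
  obtain ⟨n, rfl⟩ : ∃ n, x = n + 1 := ⟨x - 1, by omega⟩
  exact (key n).1


/-- The birth-death matrix on `S = {1, 2, 3, ...}` (embedded in `ℕ`, with row/column `0`
identically zero): `B x (x+1) = p` for `x ≥ 1`, `B x (x-1) = 1 - p` for `x ≥ 2`,
all other entries `0`. -/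
noncomputable def bdB (p : ℝ) : ℕ → ℕ → ℝ := fun x y =>
  if 1 ≤ x ∧ y = x + 1 then p
  else if 2 ≤ x ∧ y + 1 = x then 1 - p
  else 0

lemma bdB_eval1 (p : ℝ) (x : ℕ) (hx : 1 ≤ x) : bdB p x (x+1) = p := by
  unfold bdB; rw [if_pos ⟨hx, rfl⟩]

lemma bdB_eval2 (p : ℝ) (x : ℕ) (hx : 2 ≤ x) : bdB p x (x-1) = 1 - p := by
  unfold bdB; rw [if_neg (by omega), if_pos ⟨hx, by omega⟩]

lemma bdB_zero (p : ℝ) (x y : ℕ) (h1 : 1 ≤ x → y ≠ x + 1) (h2 : 2 ≤ x → y + 1 ≠ x) :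
    bdB p x y = 0 := by
  unfold bdB; rw [if_neg (by omega), if_neg (by omega)]

/-- For every `λ ≥ 2√(pq)` there exist strictly positive column and row eigenvectors
of the birth-death matrix `B` with eigenvalue `λ`. -/
theorem stmt0 (p : ℝ) (hp0 : 0 < p) (hp1 : p < 1) (lam : ℝ)
    (hlam : 2 * Real.sqrt (p * (1 - p)) ≤ lam) :
    ∃ u η : ℕ → ℝ,
      (∀ x, 1 ≤ x → 0 < u x) ∧ (∀ x, 1 ≤ x → 0 < η x) ∧
      (∀ x, 2 ≤ x → p * u (x + 1) + (1 - p) * u (x - 1) = lam * u x) ∧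
      p * u 2 = lam * u 1 ∧
      (∀ y, 2 ≤ y → p * η (y - 1) + (1 - p) * η (y + 1) = lam * η y) ∧
      (1 - p) * η 2 = lam * η 1 ∧
      (∀ x, 1 ≤ x → ∑' y, bdB p x y * u y = lam * u x) ∧
      (∀ y, 1 ≤ y → ∑' x, η x * bdB p x y = lam * η y) := by
  have hq0 : 0 < 1 - p := by linarith
  set u : ℕ → ℝ := bdSeq p (1 - p) lam with hu
  set η : ℕ → ℝ := bdSeq (1 - p) p lam with heta
  have hlam' : 2 * Real.sqrt ((1 - p) * p) ≤ lam := by rwa [mul_comm (1 - p) p]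
  have hupos := bdSeq_pos p (1 - p) lam hp0 hq0 hlam
  have hetapos := bdSeq_pos (1 - p) p lam hq0 hp0 hlam'
  have hurec := bdSeq_rec p (1 - p) lam hp0.ne' 
  have hetarec := bdSeq_rec (1 - p) p lam hq0.ne'
  have hu0 : u 0 = 0 := rfl
  have heta0 : η 0 = 0 := rfl
  have hub : p * u 2 = lam * u 1 := by
    have h := hurec 1 le_rfl
    rw [← hu] at h
    simpa [hu0] using h
  have hetab : (1 - p) * η 2 = lam * η 1 := by
    have h := hetarec 1 le_rfl
    rw [← heta] at h
    simpa [heta0] using h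
  have hurec' : ∀ x, 2 ≤ x → p * u (x + 1) + (1 - p) * u (x - 1) = lam * u x :=
    fun x hx => hurec x (by omega)
  have hetarec' : ∀ y, 2 ≤ y → p * η (y - 1) + (1 - p) * η (y + 1) = lam * η y := by
    intro y hy
    have := hetarec y (by omega)
    linarith
  refine ⟨u, η, hupos, hetapos, hurec', hub, hetarec', hetab, ?_, ?_⟩
  · intro x hx
    rcases eq_or_lt_of_le hx with h1 | h2
    · -- x = 1
      subst h1
      have hf : ∀ y ∉ ({2} : Finset ℕ), bdB p 1 y * u y = 0 := by
        intro y hy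
        simp only [Finset.mem_singleton] at hy
        rw [bdB_zero p 1 y (by omega) (by omega), zero_mul]
      rw [tsum_eq_sum hf, Finset.sum_singleton]
      have : bdB p 1 2 = p := bdB_eval1 p 1 le_rfl
      rw [this, hub]
    · have hx2 : 2 ≤ x := h2
      have hne : x + 1 ≠ x - 1 := by omega
      have hf : ∀ y ∉ ({x + 1, x - 1} : Finset ℕ), bdB p x y * u y = 0 := by
        intro y hy
        simp only [Finset.mem_insert, Finset.mem_singleton] at hy
        push_neg at hy
        rw [bdB_zero p x y (fun _ => hy.1) (by omega), zero_mul]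
      rw [tsum_eq_sum hf, Finset.sum_pair hne, bdB_eval1 p x (by omega), bdB_eval2 p x hx2]
      exact hurec' x hx2
  · intro y hy
    rcases eq_or_lt_of_le hy with h1 | h2
    · -- y = 1
      subst h1
      have hf : ∀ x ∉ ({2} : Finset ℕ), η x * bdB p x 1 = 0 := by
        intro x hx
        simp only [Finset.mem_singleton] at hx
        rw [bdB_zero p x 1 (by omega) (by omega), mul_zero]
      rw [tsum_eq_sum hf, Finset.sum_singleton]
      have : bdB p 2 1 = 1 - p := bdB_eval2 p 2 le_rfl
      rw [this]
      linarith [hetab]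
    · have hy2 : 2 ≤ y := h2
      have hne : y - 1 ≠ y + 1 := by omega
      have hf : ∀ x ∉ ({y - 1, y + 1} : Finset ℕ), η x * bdB p x y = 0 := by
        intro x hx
        simp only [Finset.mem_insert, Finset.mem_singleton] at hx
        push_neg at hx
        rw [bdB_zero p x y (by omega) (by omega), mul_zero]
      rw [tsum_eq_sum hf, Finset.sum_pair hne]
      have e1 : bdB p (y - 1) y = p := by
        have := bdB_eval1 p (y - 1) (by omega)
        rwa [show y - 1 + 1 = y by omega] at this
      have e2 : bdB p (y + 1) y = 1 - p := by
        have := bdB_eval2 p (y + 1) (by omega)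
        rwa [show y + 1 - 1 = y by omega] at this
      rw [e1, e2]
      have := hetarec' y hy2
      linarith
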